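/- For every event sequence η on [0,T], writing S(a) = Σ_{t ∈ supp(η), t ≤ a} η(t) for a ∈ [0,T], the discrepancy norm satisfies ‖η‖_D = max{max_{a ∈ [0,T]} S(a), 0} − min{min_{a ∈ [0,T]} S(a), 0}. -/

import Mathlib

open Set Function Filter Classical

/-- The next SOD sampling time after time `s` for input `f`, threshold `θ`, on `[0,T]`:
the infimum of `{t ∈ (s,T] : |f t - f s| ≥ θ}` if this set is nonempty, `none` otherwise. -/
noncomputable def sodNext (T θ : ℝ) (f : ℝ → ℝ) (s : ℝ) : Option ℝ :=
  if (∃ t ∈ Set.Ioc s T, θ ≤ |f t - f s|) then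
    some (sInf {t | t ∈ Set.Ioc s T ∧ θ ≤ |f t - f s|})
  else none

/-- The `k`-th SOD sampling time (`t_0 = 0`), `none` if the recursion has stopped before `k`. -/
noncomputable def sodTime (T θ : ℝ) (f : ℝ → ℝ) : ℕ → Option ℝ
  | 0 => some 0
  | n + 1 => (sodTime T θ f n).bind (sodNext T θ f)

/-- The SOD output event sequence `Φ_θ(f)` : it takes the value `f t_k - f t_{k-1}` at
each sampling time `t_k`, `k ≥ 1`, and `0` elsewhere. -/
noncomputable def sodOut (T θ : ℝ) (f : ℝ → ℝ) : ℝ → ℝ := fun t =>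
  if h : ∃ k : ℕ, ∃ s : ℝ, sodTime T θ f k = some s ∧ sodNext T θ f s = some t
  then f t - f h.choose_spec.choose
  else 0

/-- Membership in `F[0,T]`: continuous on `[0,T]` with `f 0 = 0`. -/
def memF (T : ℝ) (f : ℝ → ℝ) : Prop :=
  ContinuousOn f (Set.Icc 0 T) ∧ f 0 = 0

/-- An event sequence on `[0,T]`: finitely supported with support in `[0,T]`. -/
def IsEventSeq (T : ℝ) (η : ℝ → ℝ) : Prop :=
  (Function.support η).Finite ∧ Function.support η ⊆ Set.Icc 0 T

/-- `η` is `±1`-valued on its support. -/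
def IsPM (η : ℝ → ℝ) : Prop :=
  ∀ t ∈ Function.support η, η t = 1 ∨ η t = -1

/-- Weyl's discrepancy norm `‖η‖_D = sup_{0 ≤ a ≤ b ≤ T} |Σ_{t ∈ [a,b]} η t|`. -/
noncomputable def discNorm (T : ℝ) (η : ℝ → ℝ) : ℝ :=
  sSup {x | ∃ a b : ℝ, 0 ≤ a ∧ a ≤ b ∧ b ≤ T ∧ x = |∑ᶠ t ∈ Set.Icc a b, η t|}

/-- Alexiewicz norm `‖η‖_A = sup_{a ∈ [0,T]} |Σ_{t ∈ [0,a]} η t|`. -/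
noncomputable def alexNorm (T : ℝ) (η : ℝ → ℝ) : ℝ :=
  sSup {x | ∃ a : ℝ, 0 ≤ a ∧ a ≤ T ∧ x = |∑ᶠ t ∈ Set.Icc 0 a, η t|}

/-- The values of `η` at consecutive support points alternate in sign. -/
def Alternating (η : ℝ → ℝ) : Prop :=
  ∀ s u : ℝ, s ∈ Function.support η → u ∈ Function.support η → s < u →
    (∀ t ∈ Function.support η, ¬ (s < t ∧ t < u)) → η s * η u < 0

/-- One `(+−)`-transcription step: erase a `+1` followed (with no support in between) by a `−1`. -/
def StepPM (η η' : ℝ → ℝ) : Prop :=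
  ∃ s u : ℝ, s < u ∧ η s = 1 ∧ η u = -1 ∧ (∀ t : ℝ, s < t → t < u → η t = 0) ∧
    η' = Function.update (Function.update η s 0) u 0

/-- One `(−+)`-transcription step: erase a `−1` followed (with no support in between) by a `+1`. -/
def StepMP (η η' : ℝ → ℝ) : Prop :=
  ∃ s u : ℝ, s < u ∧ η s = -1 ∧ η u = 1 ∧ (∀ t : ℝ, s < t → t < u → η t = 0) ∧
    η' = Function.update (Function.update η s 0) u 0

/-- `StepsN R n x y` : `y` is obtained from `x` by `n` successive `R`-steps. -/
def StepsN (R : (ℝ → ℝ) → (ℝ → ℝ) → Prop) : ℕ → (ℝ → ℝ) → (ℝ → ℝ) → Prop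
  | 0, x, y => x = y
  | n + 1, x, z => ∃ y, R x y ∧ StepsN R n y z

/-- Uniform distance `‖f − g‖_∞` over `[0,T]`. -/
noncomputable def unifDist (T : ℝ) (f g : ℝ → ℝ) : ℝ :=
  sSup {x | ∃ t ∈ Set.Icc 0 T, x = |f t - g t|}

/-!
Write `S a = ∑_{t ≤ a} η t` and let `W` be the set of all prefix sums, including the empty
prefix `0`. A window sum `∑_{t ∈ [a,b]} η t` is `S b` minus the sum over `t < a`, and the latter
is again a prefix sum (up to the last support point before `a`, or empty). Conversely, for
`a < b` the difference `S b - S a` is the window sum over `[c,b]`, `c` being the first support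
point after `a` (or `b`). Hence `‖η‖_D` is the diameter of `W`, i.e. `sup W - inf W`.
-/

section PrefixSums

variable {α M : Type*} [LinearOrder α] {η : α → M}

theorem finsum_mem_Icc_eq_sub [AddCommGroup M] (hη : (support η).Finite) {a b : α}
    (hab : a ≤ b) :
    ∑ᶠ t ∈ Icc a b, η t = ∑ᶠ t ∈ Iic b, η t - ∑ᶠ t ∈ Iio a, η t := by
  rw [← Iio_union_Icc_eq_Iic hab, finsum_mem_union'
    ((Iio_disjoint_Ici le_rfl).mono_right Icc_subset_Ici_self)
    (hη.inter_of_right _) (hη.inter_of_right _)]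
  abel

variable [AddCommMonoid M]

theorem finsum_mem_Iio_eq_zero_or_exists (hη : (support η).Finite) (a : α) :
    ∑ᶠ t ∈ Iio a, η t = 0 ∨ ∃ c ∈ support η, ∑ᶠ t ∈ Iio a, η t = ∑ᶠ t ∈ Iic c, η t := by
  rcases (Iio a ∩ support η).eq_empty_or_nonempty with h | h
  · left
    rw [← finsum_mem_inter_support, h, finsum_mem_empty]
  · right
    obtain ⟨c, ⟨hca, hc⟩, hmax⟩ := exists_max_image _ id (hη.inter_of_right _) h
    exact ⟨c, hc, finsum_mem_inter_support_eq' _ _ _ fun t ht =>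
      ⟨fun hta => hmax t ⟨hta, ht⟩, fun htc => lt_of_le_of_lt htc hca⟩⟩

theorem exists_mem_Ioc_finsum_mem_Iio_eq (hη : (support η).Finite) {a b : α} (hab : a < b) :
    ∃ c ∈ Ioc a b, ∑ᶠ t ∈ Iio c, η t = ∑ᶠ t ∈ Iic a, η t := by
  obtain ⟨c, hc, hmin⟩ := exists_min_image (insert b (Ioc a b ∩ support η)) id
    ((hη.inter_of_right _).insert b) (insert_nonempty _ _)
  have hcab : c ∈ Ioc a b := by
    rcases hc with rfl | hc
    exacts [⟨hab, le_rfl⟩, hc.1]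
  refine ⟨c, hcab, finsum_mem_inter_support_eq' _ _ _ fun t ht =>
    ⟨fun htc => ?_, fun hta => lt_of_le_of_lt hta hcab.1⟩⟩
  by_contra! hta
  rw [mem_Iic, not_le] at hta
  exact (hmin t (Or.inr ⟨⟨hta, htc.le.trans hcab.2⟩, ht⟩)).not_gt htc

end PrefixSums

theorem max_csSup_zero_eq_csSup_insert {s : Set ℝ} (hs : BddAbove s) :
    max (sSup s) 0 = sSup (insert 0 s) := by
  rcases s.eq_empty_or_nonempty with rfl | hne
  · simp
  · rw [csSup_insert hs hne, max_comm]

theorem min_csInf_zero_eq_csInf_insert {s : Set ℝ} (hs : BddBelow s) :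
    min (sInf s) 0 = sInf (insert 0 s) := by
  rcases s.eq_empty_or_nonempty with rfl | hne
  · simp
  · rw [csInf_insert hs hne, min_comm]

def prefixSums (T : ℝ) (η : ℝ → ℝ) : Set ℝ :=
  {x | ∃ a ∈ Icc (0:ℝ) T, x = ∑ᶠ t ∈ Iic a, η t}

section EventSeq

variable {T : ℝ} {η : ℝ → ℝ}

theorem prefixSums_finite (hη : (support η).Finite) : (prefixSums T η).Finite := by
  refine (hη.finite_subsets.image fun s => ∑ᶠ t ∈ s, η t).subset ?_
  rintro x ⟨a, -, rfl⟩
  exact ⟨Iic a ∩ support η, inter_subset_right, finsum_mem_inter_support _ _⟩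

theorem finsum_mem_Iio_mem_insert_prefixSums (hη : IsEventSeq T η) (a : ℝ) :
    ∑ᶠ t ∈ Iio a, η t ∈ insert 0 (prefixSums T η) := by
  rcases finsum_mem_Iio_eq_zero_or_exists hη.1 a with h | ⟨c, hc, h⟩
  exacts [Or.inl h, Or.inr ⟨c, hη.2 hc, h⟩]

theorem finsum_mem_Iio_zero_eq_zero (hη : IsEventSeq T η) : ∑ᶠ t ∈ Iio 0, η t = 0 :=
  finsum_mem_eq_zero_of_forall_eq_zero fun _ ht =>
    notMem_support.1 fun hs => (hη.2 hs).1.not_gt ht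

theorem discNorm_nonneg (T : ℝ) (η : ℝ → ℝ) : 0 ≤ discNorm T η :=
  Real.sSup_nonneg <| by
    rintro _ ⟨_, _, _, _, _, rfl⟩
    exact abs_nonneg _

theorem abs_finsum_mem_Icc_le_diam (hη : IsEventSeq T η) {a b : ℝ} (ha : 0 ≤ a) (hab : a ≤ b)
    (hb : b ≤ T) : |∑ᶠ t ∈ Icc a b, η t| ≤ Metric.diam (insert 0 (prefixSums T η)) := by
  rw [finsum_mem_Icc_eq_sub hη.1 hab, ← Real.dist_eq]
  exact Metric.dist_le_diam_of_mem ((prefixSums_finite hη.1).insert 0).isBounded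
    (Or.inr ⟨b, ⟨ha.trans hab, hb⟩, rfl⟩) (finsum_mem_Iio_mem_insert_prefixSums hη a)

theorem abs_finsum_mem_Icc_le_discNorm (hη : IsEventSeq T η) {a b : ℝ} (ha : 0 ≤ a)
    (hab : a ≤ b) (hb : b ≤ T) : |∑ᶠ t ∈ Icc a b, η t| ≤ discNorm T η := by
  refine le_csSup ⟨Metric.diam (insert 0 (prefixSums T η)), ?_⟩ ⟨a, b, ha, hab, hb, rfl⟩
  rintro _ ⟨a, b, ha, hab, hb, rfl⟩
  exact abs_finsum_mem_Icc_le_diam hη ha hab hb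

theorem abs_finsum_mem_Iic_le_discNorm (hη : IsEventSeq T η) {b : ℝ} (hb : b ∈ Icc 0 T) :
    |∑ᶠ t ∈ Iic b, η t| ≤ discNorm T η := by
  have h := abs_finsum_mem_Icc_le_discNorm hη le_rfl hb.1 hb.2
  rwa [finsum_mem_Icc_eq_sub hη.1 hb.1, finsum_mem_Iio_zero_eq_zero hη, sub_zero] at h

theorem abs_finsum_mem_Iic_sub_le_discNorm (hη : IsEventSeq T η) {a b : ℝ} (ha : a ∈ Icc 0 T)
    (hb : b ∈ Icc 0 T) : |∑ᶠ t ∈ Iic b, η t - ∑ᶠ t ∈ Iic a, η t| ≤ discNorm T η := by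
  wlog hab : a ≤ b generalizing a b
  · rw [abs_sub_comm]
    exact this hb ha (le_of_not_ge hab)
  rcases hab.eq_or_lt with rfl | hab
  · rw [sub_self, abs_zero]
    exact discNorm_nonneg T η
  obtain ⟨c, hc, hsum⟩ := exists_mem_Ioc_finsum_mem_Iio_eq hη.1 hab
  rw [← hsum, ← finsum_mem_Icc_eq_sub hη.1 hc.2]
  exact abs_finsum_mem_Icc_le_discNorm hη (ha.1.trans hc.1.le) hc.2 hb.2

theorem discNorm_eq_diam (hη : IsEventSeq T η) :
    discNorm T η = Metric.diam (insert 0 (prefixSums T η)) := by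
  refine le_antisymm (Real.sSup_le ?_ Metric.diam_nonneg) ?_
  · rintro _ ⟨a, b, ha, hab, hb, rfl⟩
    exact abs_finsum_mem_Icc_le_diam hη ha hab hb
  refine Metric.diam_le_of_forall_dist_le (discNorm_nonneg T η) ?_
  rintro x (rfl | ⟨a, ha, rfl⟩) y (rfl | ⟨b, hb, rfl⟩) <;> rw [Real.dist_eq]
  · simpa using discNorm_nonneg T η
  · simpa using abs_finsum_mem_Iic_le_discNorm hη hb
  · simpa using abs_finsum_mem_Iic_le_discNorm hη ha
  · exact abs_finsum_mem_Iic_sub_le_discNorm hη hb ha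

end EventSeq

theorem stmt9_general (T : ℝ) (η : ℝ → ℝ) (hη : IsEventSeq T η) :
    discNorm T η =
      max (sSup {x | ∃ a ∈ Set.Icc (0:ℝ) T, x = ∑ᶠ t ∈ Set.Iic a, η t}) 0 -
      min (sInf {x | ∃ a ∈ Set.Icc (0:ℝ) T, x = ∑ᶠ t ∈ Set.Iic a, η t}) 0 := by
  have hfin := prefixSums_finite (T := T) hη.1
  change discNorm T η = max (sSup (prefixSums T η)) 0 - min (sInf (prefixSums T η)) 0
  rw [max_csSup_zero_eq_csSup_insert hfin.bddAbove, min_csInf_zero_eq_csInf_insert hfin.bddBelow,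
    ← Real.diam_eq (hfin.insert 0).isBounded]
  exact discNorm_eq_diam hη

/-- with `S(a) = Σ_{t ∈ supp η, t ≤ a} η t`, the discrepancy norm equals
`max{max_a S(a), 0} − min{min_a S(a), 0}` (max/min over `a ∈ [0,T]`). -/
theorem stmt9 (T : ℝ) (hT : 0 < T) (η : ℝ → ℝ) (hη : IsEventSeq T η) :
    discNorm T η =
      max (sSup {x | ∃ a ∈ Set.Icc (0:ℝ) T, x = ∑ᶠ t ∈ Set.Iic a, η t}) 0 -
      min (sInf {x | ∃ a ∈ Set.Icc (0:ℝ) T, x = ∑ᶠ t ∈ Set.Iic a, η t}) 0 :=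
  stmt9_general T η hη
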